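/- arXiv:1809.05291 — 3 statements merged into one kernel-verified Lean document; each statement's English description precedes it below -/
import Mathlib

section
/- Let R be an integral domain of characteristic zero, δ a locally nilpotent derivation on R, and f ∈ R. If f divides δ(f) in R, then δ(f) = 0. -/
open Finset

section aux

variable {R : Type*} [CommRing R] (δ : R → R)
    (hadd : ∀ a b : R, δ (a + b) = δ a + δ b)

private def D : R →+ R :=
  { toFun := δ
    map_zero' := by have := hadd 0 0; simpa using this.symm
    map_add' := hadd }

include hadd in
private lemma iter_leibniz (hleib : ∀ a b : R, δ (a * b) = δ a * b + a * δ b) :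
    ∀ (n : ℕ) (p q : R), δ^[n] (p * q) =
      ∑ k ∈ range n.succ, (n.choose k • (δ^[n - k] p * δ^[k] q)) := by
  have hD : ∀ x : R, D δ hadd x = δ x := fun _ => rfl
  intro n
  induction n with
  | zero => simp [Finset.range]
  | succ n IH =>
    intro p q
    calc
      δ^[n + 1] (p * q) =
          δ (∑ k ∈ range n.succ, n.choose k • (δ^[n - k] p * δ^[k] q)) := by
        rw [Function.iterate_succ_apply', IH]
      _ = (∑ k ∈ range n.succ, n.choose k • (δ^[n - k + 1] p * δ^[k] q)) +
          ∑ k ∈ range n.succ, n.choose k • (δ^[n - k] p * δ^[k + 1] q) := by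
        rw [← hD, map_sum]
        simp_rw [map_nsmul, hD, hleib, ← Function.iterate_succ_apply',
          Function.iterate_succ_apply', smul_add, sum_add_distrib]
      _ = (∑ k ∈ range n.succ,
                n.choose k.succ • (δ^[n - k] p * δ^[k + 1] q)) +
              1 • (δ^[n + 1] p * δ^[0] q) +
            ∑ k ∈ range n.succ, n.choose k • (δ^[n - k] p * δ^[k + 1] q) := ?_
      _ = ((∑ k ∈ range n.succ, n.choose k • (δ^[n - k] p * δ^[k + 1] q)) +
              ∑ k ∈ range n.succ,
                n.choose k.succ • (δ^[n - k] p * δ^[k + 1] q)) +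
            1 • (δ^[n + 1] p * δ^[0] q) := by
        rw [add_comm, add_assoc]
      _ = (∑ i ∈ range n.succ,
              (n + 1).choose (i + 1) • (δ^[n + 1 - (i + 1)] p * δ^[i + 1] q)) +
            1 • (δ^[n + 1] p * δ^[0] q) := by
        simp_rw [Nat.choose_succ_succ, Nat.succ_sub_succ, add_smul, sum_add_distrib]
      _ = ∑ k ∈ range n.succ.succ,
            n.succ.choose k • (δ^[n.succ - k] p * δ^[k] q) := by
        rw [sum_range_succ' _ n.succ, Nat.choose_zero_right, tsub_zero]
    congr
    refine (sum_range_succ' _ _).trans (congr_arg₂ (· + ·) ?_ ?_)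
    · rw [sum_range_succ, Nat.choose_succ_self, zero_smul, add_zero]
      refine sum_congr rfl fun k hk => ?_
      rw [mem_range] at hk
      congr
      omega
    · rw [Nat.choose_zero_right, tsub_zero]

end aux

/-- If `R` is an integral domain of characteristic zero, `δ` a locally nilpotent
derivation on `R` (additive map satisfying the Leibniz rule, with every element
annihilated by some iterate), and `f ∣ δ f`, then `δ f = 0`. -/
theorem lnd_dvd_eq_zero {R : Type*} [CommRing R] [IsDomain R] [CharZero R]
    (δ : R → R)
    (hadd : ∀ a b : R, δ (a + b) = δ a + δ b)
    (hleib : ∀ a b : R, δ (a * b) = δ a * b + a * δ b)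
    (hln : ∀ a : R, ∃ k : ℕ, δ^[k] a = 0)
    (f : R) (hdvd : f ∣ δ f) : δ f = 0 := by
  classical
  by_contra hne
  obtain ⟨g, hg⟩ := hdvd
  have hd0 : δ (0 : R) = 0 := by have := hadd 0 0; simpa using this.symm
  have hiter0 : ∀ n : ℕ, δ^[n] (0 : R) = 0 := by
    intro n; induction n with
    | zero => rfl
    | succ n ih => rw [Function.iterate_succ_apply', ih, hd0]
  have hstable : ∀ (x : R) (j k : ℕ), δ^[j] x = 0 → j ≤ k → δ^[k] x = 0 := by
    intro x j k hj hjk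
    have : δ^[k - j + j] x = 0 := by
      rw [Function.iterate_add_apply, hj, hiter0]
    rwa [Nat.sub_add_cancel hjk] at this
  -- get top degrees for f and g
  have htop : ∀ x : R, x ≠ 0 → ∃ m : ℕ, δ^[m] x ≠ 0 ∧ δ^[m + 1] x = 0 := by
    intro x hx
    have hex := hln x
    have hpos : 0 < Nat.find hex := by
      rcases Nat.eq_zero_or_pos (Nat.find hex) with h | h
      · exact absurd (by simpa [h] using Nat.find_spec hex) hx
      · exact h
    refine ⟨Nat.find hex - 1, Nat.find_min hex (by omega), ?_⟩
    have h1 : Nat.find hex - 1 + 1 = Nat.find hex := by omega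
    rw [h1]
    exact Nat.find_spec hex
  have hf0 : f ≠ 0 := by
    rintro rfl
    exact hne (by simpa using hd0)
  have hg0 : g ≠ 0 := by
    rintro rfl
    exact hne (by simpa using hg)
  obtain ⟨m, hmne, hm1⟩ := htop f hf0
  obtain ⟨n, hnne, hn1⟩ := htop g hg0
  have hm_pos : 1 ≤ m := by
    by_contra h
    exact hne (by simpa using hstable f (m + 1) 1 hm1 (by omega))
  -- compute δ^[m+n] (f * g)
  have key := iter_leibniz δ hadd hleib (m + n) f g
  have hsingle : δ^[m + n] (f * g) = (m + n).choose n • (δ^[m] f * δ^[n] g) := by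
    rw [key]
    rw [Finset.sum_eq_single n]
    · have h1 : m + n - n = m := by omega
      rw [h1]
    · intro k hk hkn
      rcases lt_or_gt_of_ne hkn with h | h
      · have : δ^[m + n - k] f = 0 := hstable f (m + 1) (m + n - k) hm1 (by omega)
        simp [this]
      · have : δ^[k] g = 0 := hstable g (n + 1) k hn1 (by omega)
        simp [this]
    · intro h
      exact absurd (Finset.mem_range.mpr (by omega)) h
  -- but f * g = δ f, so δ^[m+n] (f*g) = δ^[m+n+1] f = 0
  have hzero : δ^[m + n] (f * g) = 0 := by
    rw [← hg, ← Function.iterate_succ_apply]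
    exact hstable f (m + 1) (m + n + 1) hm1 (by omega)
  rw [hsingle] at hzero
  have hchoose : ((m + n).choose n : R) ≠ 0 := by
    exact_mod_cast Nat.cast_ne_zero.mpr (Nat.choose_pos (by omega)).ne'
  rw [nsmul_eq_mul] at hzero
  rcases mul_eq_zero.mp hzero with h | h
  · exact hchoose h
  · rcases mul_eq_zero.mp h with h' | h'
    · exact hmne h'
    · exact hnne h'
end

section
/- Let b ≤ c be positive integers, c = bd + e with 0 ≤ e < b, and Q_{b,c}(x₁,y₁,x₂,y₂) = Σ_{k=1}^{d} C(d+1,k) x₁^{e+b(k−1)} y₁^{e+b(d−k)} x₂^{d−k+1} y₂^{k}. Then the operation on K³ given by (x₁,x₂,x₃)*(y₁,y₂,y₃) = (x₁y₁, x₁^b y₂ + y₁^b x₂, x₁^c y₃ + y₁^c x₃ + Q_{b,c}(x₁,y₁,x₂,y₂)) is commutative, associative, and has unit (1,0,0). -/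
open Finset

/-- The polynomial `Q_{b,c}` evaluated at ring elements. -/
def Qpoly {K : Type*} [CommRing K] (b d e : ℕ) (x₁ y₁ x₂ y₂ : K) : K :=
  ∑ k ∈ Finset.Icc 1 d, ((d + 1).choose k : K) *
    x₁ ^ (e + b * (k - 1)) * y₁ ^ (e + b * (d - k)) * x₂ ^ (d - k + 1) * y₂ ^ k

/-- The multiplication of the monoid `M +_b A +_{b,c} A` on `K³`. -/
def MbAbcA {K : Type*} [CommRing K] (b c d e : ℕ) (x y : K × K × K) : K × K × K :=
  (x.1 * y.1,
   x.1 ^ b * y.2.1 + y.1 ^ b * x.2.1,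
   x.1 ^ c * y.2.2 + y.1 ^ c * x.2.2 + Qpoly b d e x.1 y.1 x.2.1 y.2.1)

lemma Qpoly_key {K : Type*} [CommRing K] (b d e : ℕ) (he : e ≤ b) (x₁ y₁ x₂ y₂ : K) :
    x₁ ^ (b - e) * y₁ ^ (b - e) * Qpoly b d e x₁ y₁ x₂ y₂ =
      (x₁ ^ b * y₂ + y₁ ^ b * x₂) ^ (d + 1)
        - (x₁ ^ b * y₂) ^ (d + 1) - (y₁ ^ b * x₂) ^ (d + 1) := by
  obtain ⟨f, rfl⟩ : ∃ f, b = e + f := ⟨b - e, by omega⟩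
  have hf : e + f - e = f := by omega
  rw [hf, Qpoly, Finset.mul_sum, add_pow, Finset.sum_range_succ, Finset.sum_range_succ']
  rw [show Finset.Icc 1 d = Finset.Ico 1 (d+1) by rfl, Finset.sum_Ico_eq_sum_range]
  simp only [Nat.add_sub_cancel]
  have hterm : ∀ i ∈ Finset.range d,
      x₁ ^ f * y₁ ^ f * (((d + 1).choose (1 + i) : K) *
        x₁ ^ (e + (e + f) * ((1 + i) - 1)) * y₁ ^ (e + (e + f) * (d - (1 + i))) *
        x₂ ^ (d - (1 + i) + 1) * y₂ ^ (1 + i)) =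
      (x₁ ^ (e + f) * y₂) ^ (i + 1) * (y₁ ^ (e + f) * x₂) ^ (d + 1 - (i + 1)) *
        ((d + 1).choose (i + 1) : K) := by
    intro i hi
    simp only [Finset.mem_range] at hi
    obtain ⟨j, rfl⟩ : ∃ j, d = i + 1 + j := ⟨d - i - 1, by omega⟩
    have h1 : 1 + i - 1 = i := by omega
    have h2 : i + 1 + j - (1 + i) = j := by omega
    have h3 : i + 1 + j + 1 - (i + 1) = j + 1 := by omega
    have h4 : 1 + i = i + 1 := by omega
    rw [h1, h2, h3, h4]
    ring
  rw [Finset.sum_congr rfl hterm]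
  simp only [pow_zero, Nat.choose_zero_right, Nat.choose_self, Nat.sub_self, Nat.sub_zero,
    Nat.cast_one, one_mul, mul_one, Nat.add_sub_cancel]
  ring

lemma Qpoly_symm {K : Type*} [CommRing K] (b d e : ℕ) (x₁ y₁ x₂ y₂ : K) :
    Qpoly b d e x₁ y₁ x₂ y₂ = Qpoly b d e y₁ x₁ y₂ x₂ := by
  unfold Qpoly
  refine Finset.sum_nbij' (fun k => d + 1 - k) (fun k => d + 1 - k) ?_ ?_ ?_ ?_ ?_ <;>
    intro k hk <;> simp only [Finset.mem_Icc] at hk ⊢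
  · omega
  · omega
  · omega
  · omega
  · have h1 : d + 1 - k - 1 = d - k := by omega
    have h2 : d - (d + 1 - k) = k - 1 := by omega
    have h3 : d - (d + 1 - k) + 1 = k := by omega
    have h4 : (d + 1).choose (d + 1 - k) = (d + 1).choose k :=
      Nat.choose_symm (by omega)
    have h5 : d + 1 - k = d - k + 1 := by omega
    rw [h1, h3, h2, h4, h5]
    ring

lemma eval_Qpoly {K : Type*} [CommRing K] {σ : Type*} (v : σ → K) (b d e : ℕ)
    (p q r s : MvPolynomial σ K) :
    MvPolynomial.eval v (Qpoly b d e p q r s) =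
      Qpoly b d e (MvPolynomial.eval v p) (MvPolynomial.eval v q)
        (MvPolynomial.eval v r) (MvPolynomial.eval v s) := by
  simp [Qpoly]

lemma Qpoly_assoc_aux {K : Type*} [CommRing K] [IsDomain K]
    (b c d e : ℕ) (he : e ≤ b) (hc : c = b * d + e)
    (x₁ x₂ y₁ y₂ z₁ z₂ : K) (hx : x₁ ≠ 0) (hy : y₁ ≠ 0) (hz : z₁ ≠ 0) :
    z₁ ^ c * Qpoly b d e x₁ y₁ x₂ y₂ +
      Qpoly b d e (x₁ * y₁) z₁ (x₁ ^ b * y₂ + y₁ ^ b * x₂) z₂ =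
    x₁ ^ c * Qpoly b d e y₁ z₁ y₂ z₂ +
      Qpoly b d e x₁ (y₁ * z₁) x₂ (y₁ ^ b * z₂ + z₁ ^ b * y₂) := by
  apply mul_left_cancel₀
    (pow_ne_zero (b - e) (mul_ne_zero (mul_ne_zero hx hy) hz)) (b := _)
  have h1 := Qpoly_key b d e he x₁ y₁ x₂ y₂
  have h2 := Qpoly_key b d e he (x₁ * y₁) z₁ (x₁ ^ b * y₂ + y₁ ^ b * x₂) z₂
  have h3 := Qpoly_key b d e he y₁ z₁ y₂ z₂
  have h4 := Qpoly_key b d e he x₁ (y₁ * z₁) x₂ (y₁ ^ b * z₂ + z₁ ^ b * y₂)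
  obtain ⟨f, rfl⟩ : ∃ f, b = e + f := ⟨b - e, by omega⟩
  have hf : e + f - e = f := by omega
  rw [hf] at h1 h2 h3 h4 ⊢
  subst hc
  have step : ∀ a u : K, a ^ f * a ^ ((e + f) * d + e) * u ^ (d + 1) =
      (a ^ (e + f) * u) ^ (d + 1) := by
    intro a u
    rw [← pow_add, show f + ((e + f) * d + e) = (e + f) * (d + 1) from by ring,
      pow_mul, ← mul_pow]
  linear_combination (z₁ ^ f * z₁ ^ ((e + f) * d + e)) * h1 + h2
    - (x₁ ^ f * x₁ ^ ((e + f) * d + e)) * h3 - h4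
    + step z₁ (x₁ ^ (e + f) * y₂ + y₁ ^ (e + f) * x₂)
    - step z₁ (x₁ ^ (e + f) * y₂) - step z₁ (y₁ ^ (e + f) * x₂)
    - step x₁ (y₁ ^ (e + f) * z₂ + z₁ ^ (e + f) * y₂)
    + step x₁ (y₁ ^ (e + f) * z₂) + step x₁ (z₁ ^ (e + f) * y₂)

lemma Qpoly_assoc {K : Type*} [Field K]
    (b c d e : ℕ) (he : e ≤ b) (hc : c = b * d + e)
    (x₁ x₂ y₁ y₂ z₁ z₂ : K) :
    z₁ ^ c * Qpoly b d e x₁ y₁ x₂ y₂ +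
      Qpoly b d e (x₁ * y₁) z₁ (x₁ ^ b * y₂ + y₁ ^ b * x₂) z₂ =
    x₁ ^ c * Qpoly b d e y₁ z₁ y₂ z₂ +
      Qpoly b d e x₁ (y₁ * z₁) x₂ (y₁ ^ b * z₂ + z₁ ^ b * y₂) := by
  have h := Qpoly_assoc_aux (K := MvPolynomial (Fin 6) K) b c d e he hc
    (MvPolynomial.X 0) (MvPolynomial.X 1) (MvPolynomial.X 2) (MvPolynomial.X 3)
    (MvPolynomial.X 4) (MvPolynomial.X 5)
    (MvPolynomial.X_ne_zero _) (MvPolynomial.X_ne_zero _) (MvPolynomial.X_ne_zero _)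
  have h' := congrArg (MvPolynomial.eval ![x₁, x₂, y₁, y₂, z₁, z₂]) h
  simpa [eval_Qpoly] using h'

/-- For positive integers `b ≤ c` with `c = b*d + e`, `0 ≤ e < b`, the operation
`MbAbcA` on `K³` is commutative, associative, and has unit `(1,0,0)`. -/
theorem MbAbcA_comm_assoc_unit {K : Type*} [Field K] [CharZero K]
    (b c d e : ℕ) (hb : 1 ≤ b) (hbc : b ≤ c) (hc : c = b * d + e) (he : e < b) :
    (∀ x y : K × K × K, MbAbcA b c d e x y = MbAbcA b c d e y x) ∧
    (∀ x y z : K × K × K,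
      MbAbcA b c d e (MbAbcA b c d e x y) z = MbAbcA b c d e x (MbAbcA b c d e y z)) ∧
    (∀ x : K × K × K, MbAbcA b c d e ((1 : K), (0 : K), (0 : K)) x = x) := by
  refine ⟨?_, ?_, ?_⟩
  · rintro ⟨x₁, x₂, x₃⟩ ⟨y₁, y₂, y₃⟩
    simp only [MbAbcA, Prod.mk.injEq]
    exact ⟨by ring, by ring, by rw [Qpoly_symm b d e x₁ y₁ x₂ y₂]; ring⟩
  · rintro ⟨x₁, x₂, x₃⟩ ⟨y₁, y₂, y₃⟩ ⟨z₁, z₂, z₃⟩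
    simp only [MbAbcA, Prod.mk.injEq]
    refine ⟨by ring, by ring, ?_⟩
    linear_combination Qpoly_assoc b c d e he.le hc x₁ x₂ y₁ y₂ z₁ z₂
  · rintro ⟨x₁, x₂, x₃⟩
    simp only [MbAbcA, Prod.mk.injEq]
    have hQ : Qpoly b d e (1 : K) x₁ 0 x₂ = 0 := by
      apply Finset.sum_eq_zero
      intro k hk
      simp only [Finset.mem_Icc] at hk
      rw [zero_pow (by omega : d - k + 1 ≠ 0)]
      ring
    exact ⟨by ring, by ring, by rw [hQ]; ring⟩
end

section
/- Let d ≥ 1 and consider K⁴ with the operation x*y = (x₁y₁, x₂y₂, x₁y₃ + y₁x₃, x₁^d x₂ y₄ + y₁^d y₂ x₄ + x₁^{d−1} y₁^{d−1} x₂ y₂ x₃ y₃). This operation is commutative, associative, and has unit (1,1,0,0). -/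
/-- The rank-2 multiplication on `K⁴` arising from the non-normalized additive action
on the Hirzebruch surface `F_d` (`d ≥ 1`). -/
def hirzebruchMul {K : Type*} [Field K] (d : ℕ) (x y : K × K × K × K) : K × K × K × K :=
  (x.1 * y.1,
   x.2.1 * y.2.1,
   x.1 * y.2.2.1 + y.1 * x.2.2.1,
   x.1 ^ d * x.2.1 * y.2.2.2 + y.1 ^ d * y.2.1 * x.2.2.2 +
     x.1 ^ (d - 1) * y.1 ^ (d - 1) * x.2.1 * y.2.1 * x.2.2.1 * y.2.2.1)

/-- For `d ≥ 1`, the operation `hirzebruchMul` on `K⁴` is commutative, associative,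
and has unit `(1,1,0,0)`. -/
theorem hirzebruchMul_comm_assoc_unit {K : Type*} [Field K] (d : ℕ) (hd : 1 ≤ d) :
    (∀ x y : K × K × K × K, hirzebruchMul d x y = hirzebruchMul d y x) ∧
    (∀ x y z : K × K × K × K,
      hirzebruchMul d (hirzebruchMul d x y) z = hirzebruchMul d x (hirzebruchMul d y z)) ∧
    (∀ x : K × K × K × K,
      hirzebruchMul d ((1 : K), (1 : K), (0 : K), (0 : K)) x = x) := by
  obtain ⟨e, rfl⟩ : ∃ e, d = e + 1 := ⟨d - 1, (Nat.succ_pred_eq_of_pos hd).symm⟩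
  refine ⟨fun x y => ?_, fun x y z => ?_, fun x => ?_⟩
  · obtain ⟨a, b, c, f⟩ := x
    simp only [hirzebruchMul, Prod.mk.injEq]
    refine ⟨by ring, by ring, by ring, by ring⟩
  · simp only [hirzebruchMul, Prod.mk.injEq, Nat.add_sub_cancel]
    refine ⟨by ring, by ring, by ring, by ring⟩
  · obtain ⟨a, b, c, f⟩ := x
    simp only [hirzebruchMul, Prod.mk.injEq]
    refine ⟨by ring, by ring, by ring, by ring⟩
end
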